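/- The rational function T(x₁,x₂) = (x₁x₂⁶ + x₂⁶ + x₁³x₂³ + 5x₁x₂³ + x₁⁴ + 2x₂³ + 4x₁³ + 6x₁² + 4x₁ + 1)/(x₁²x₂³) satisfies T((x₂³+1)/x₁, x₂) = T(x₁,x₂) and T(x₁, (x₁+1)/x₂) = T(x₁,x₂), as identities of rational functions. -/
import Mathlib


open MvPolynomial

/-- The field of rational functions `ℚ(x₁, x₂)`. -/
noncomputable abbrev QF := FractionRing (MvPolynomial (Fin 2) ℚ)

noncomputable def x₁ : QF := algebraMap (MvPolynomial (Fin 2) ℚ) QF (X 0)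
noncomputable def x₂ : QF := algebraMap (MvPolynomial (Fin 2) ℚ) QF (X 1)

/-- A mutation invariant of type `G₂`. -/
noncomputable def T (a b : QF) : QF :=
  (a * b ^ 6 + b ^ 6 + a ^ 3 * b ^ 3 + 5 * a * b ^ 3 + a ^ 4 + 2 * b ^ 3 +
      4 * a ^ 3 + 6 * a ^ 2 + 4 * a + 1) / (a ^ 2 * b ^ 3)

lemma alg_ne {p : MvPolynomial (Fin 2) ℚ} (hp : p ≠ 0) :
    algebraMap (MvPolynomial (Fin 2) ℚ) QF p ≠ 0 := fun h =>
  hp (IsFractionRing.injective (MvPolynomial (Fin 2) ℚ) QF (by simpa using h))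

lemma key1 {K : Type*} [Field K] (a b : K) (ha : a ≠ 0) (h3 : b ^ 3 + 1 ≠ 0) :
    ((b^3+1)/a * b ^ 6 + b ^ 6 + ((b^3+1)/a) ^ 3 * b ^ 3 + 5 * ((b^3+1)/a) * b ^ 3 + ((b^3+1)/a) ^ 4 + 2 * b ^ 3 +
      4 * ((b^3+1)/a) ^ 3 + 6 * ((b^3+1)/a) ^ 2 + 4 * ((b^3+1)/a) + 1) / (((b^3+1)/a) ^ 2 * b ^ 3) =
    (a * b ^ 6 + b ^ 6 + a ^ 3 * b ^ 3 + 5 * a * b ^ 3 + a ^ 4 + 2 * b ^ 3 +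
      4 * a ^ 3 + 6 * a ^ 2 + 4 * a + 1) / (a ^ 2 * b ^ 3) := by
  have h4 : a ^ 4 ≠ 0 := pow_ne_zero _ ha
  have k1 : (b^3+1)/a * a ^ 4 = (b^3+1) * a ^ 3 := by
    rw [div_mul_eq_mul_div, div_eq_iff ha]; ring
  have k2 : ((b^3+1)/a) ^ 2 * a ^ 4 = (b^3+1) ^ 2 * a ^ 2 := by
    rw [div_pow, div_mul_eq_mul_div, div_eq_iff (pow_ne_zero _ ha)]; ring
  have k3 : ((b^3+1)/a) ^ 3 * a ^ 4 = (b^3+1) ^ 3 * a := by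
    rw [div_pow, div_mul_eq_mul_div, div_eq_iff (pow_ne_zero _ ha)]; ring
  have k4 : ((b^3+1)/a) ^ 4 * a ^ 4 = (b^3+1) ^ 4 := by
    rw [div_pow, div_mul_cancel₀ _ (pow_ne_zero _ ha)]
  rw [← mul_div_mul_right _ _ h4]
  have e1 : ((b^3+1)/a * b ^ 6 + b ^ 6 + ((b^3+1)/a) ^ 3 * b ^ 3 + 5 * ((b^3+1)/a) * b ^ 3 + ((b^3+1)/a) ^ 4 + 2 * b ^ 3 +
      4 * ((b^3+1)/a) ^ 3 + 6 * ((b^3+1)/a) ^ 2 + 4 * ((b^3+1)/a) + 1) * a ^ 4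
      = (b^3+1)^2 * (a * b ^ 6 + b ^ 6 + a ^ 3 * b ^ 3 + 5 * a * b ^ 3 + a ^ 4 + 2 * b ^ 3 +
      4 * a ^ 3 + 6 * a ^ 2 + 4 * a + 1) := by
    linear_combination b ^ 6 * k1 + b ^ 3 * k3 + 5 * b ^ 3 * k1 + k4 + 4 * k3 + 6 * k2 + 4 * k1
  have e2 : ((b^3+1)/a) ^ 2 * b ^ 3 * a ^ 4 = (b^3+1) ^ 2 * (a ^ 2 * b ^ 3) := by
    linear_combination b ^ 3 * k2
  rw [e1, e2, mul_div_mul_left _ _ (pow_ne_zero 2 h3)]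

lemma key2 {K : Type*} [Field K] (a b : K) (hb : b ≠ 0) (h3 : a + 1 ≠ 0) :
    (a * ((a+1)/b) ^ 6 + ((a+1)/b) ^ 6 + a ^ 3 * ((a+1)/b) ^ 3 + 5 * a * ((a+1)/b) ^ 3 + a ^ 4 + 2 * ((a+1)/b) ^ 3 +
      4 * a ^ 3 + 6 * a ^ 2 + 4 * a + 1) / (a ^ 2 * ((a+1)/b) ^ 3) =
    (a * b ^ 6 + b ^ 6 + a ^ 3 * b ^ 3 + 5 * a * b ^ 3 + a ^ 4 + 2 * b ^ 3 +
      4 * a ^ 3 + 6 * a ^ 2 + 4 * a + 1) / (a ^ 2 * b ^ 3) := by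
  have h6 : b ^ 6 ≠ 0 := pow_ne_zero _ hb
  have k3 : ((a+1)/b) ^ 3 * b ^ 6 = (a+1) ^ 3 * b ^ 3 := by
    rw [div_pow, div_mul_eq_mul_div, div_eq_iff (pow_ne_zero _ hb)]; ring
  have k6 : ((a+1)/b) ^ 6 * b ^ 6 = (a+1) ^ 6 := by
    rw [div_pow, div_mul_cancel₀ _ (pow_ne_zero _ hb)]
  rw [← mul_div_mul_right _ _ h6]
  have e1 : (a * ((a+1)/b) ^ 6 + ((a+1)/b) ^ 6 + a ^ 3 * ((a+1)/b) ^ 3 + 5 * a * ((a+1)/b) ^ 3 + a ^ 4 + 2 * ((a+1)/b) ^ 3 +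
      4 * a ^ 3 + 6 * a ^ 2 + 4 * a + 1) * b ^ 6
      = (a+1)^3 * (a * b ^ 6 + b ^ 6 + a ^ 3 * b ^ 3 + 5 * a * b ^ 3 + a ^ 4 + 2 * b ^ 3 +
      4 * a ^ 3 + 6 * a ^ 2 + 4 * a + 1) := by
    linear_combination a * k6 + k6 + a ^ 3 * k3 + 5 * a * k3 + 2 * k3
  have e2 : a ^ 2 * ((a+1)/b) ^ 3 * b ^ 6 = (a+1) ^ 3 * (a ^ 2 * b ^ 3) := by
    linear_combination a ^ 2 * k3
  rw [e1, e2, mul_div_mul_left _ _ (pow_ne_zero 3 h3)]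

/-- `T` is invariant under the type `G₂` mutations
`μ₁(x₁,x₂) = ((x₂³+1)/x₁, x₂)` and `μ₂(x₁,x₂) = (x₁, (x₁+1)/x₂)`. -/
theorem stmt_7 :
    T ((x₂ ^ 3 + 1) / x₁) x₂ = T x₁ x₂ ∧ T x₁ ((x₁ + 1) / x₂) = T x₁ x₂ := by
  have h1 : x₁ ≠ 0 := alg_ne (X_ne_zero 0)
  have h2 : x₂ ≠ 0 := alg_ne (X_ne_zero 1)
  have h3 : x₂ ^ 3 + 1 ≠ 0 := by
    have h : x₂ ^ 3 + 1 = algebraMap (MvPolynomial (Fin 2) ℚ) QF ((X 1) ^ 3 + 1) := by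
      simp [x₂, map_add, map_pow]
    rw [h]
    refine alg_ne fun h => ?_
    have := congrArg constantCoeff h
    simp at this
  have h4 : x₁ + 1 ≠ 0 := by
    have h : x₁ + 1 = algebraMap (MvPolynomial (Fin 2) ℚ) QF (X 0 + 1) := by
      simp [x₁, map_add]
    rw [h]
    refine alg_ne fun h => ?_
    have := congrArg constantCoeff h
    simp at this
  exact ⟨key1 x₁ x₂ h1 h3, key2 x₁ x₂ h2 h4⟩
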